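/- arXiv:1511.02627 — 4 statements merged into one kernel-verified Lean document; each statement's English description precedes it below -/
import Mathlib

section
/- Let A, X be d×d Hermitian matrices and f : I → ℝ a continuously differentiable function on an open interval I containing the eigenvalues of A + tX for t near t₀. Then the derivative of t ↦ Tr[f(A + tX)] at t = t₀ equals Tr[X · f'(A + t₀X)]. -/
/-!
Choose a compact interval `[a, b] ⊆ I` containing the spectra of `A + tX` for all `t` near `t₀`
(the union of the spectra over a compact set of parameters is compact). By Weierstrass,
approximate `f'` uniformly on `[a, b]` by polynomials and integrate them, getting polynomials
`pₙ` with `pₙ → f` and `pₙ' → f'` uniformly on `[a, b]`. For a polynomial `p`, cyclicity of the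
trace gives `d/dt Tr (A + tX)ᵏ = k Tr[X (A + tX)ᵏ⁻¹]`, so the formula holds for `p`. Finally
`Tr[X g(M)] = ∑ᵢ (U* X U)ᵢᵢ g(λᵢ)` with `|(U* X U)ᵢᵢ|` bounded independently of `M`, so uniform
convergence on `[a, b]` passes to the traces, and a uniform limit of derivatives is the
derivative of the limit.
-/

open Matrix Polynomial Filter Topology Set Metric

lemma tendstoUniformlyOn_of_dist_le {ι α β : Type*} [PseudoMetricSpace β] {l : Filter ι}
    {F : ι → α → β} {f : α → β} {s : Set α} {u : ι → ℝ} (hu : Tendsto u l (𝓝 0))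
    (h : ∀ i, ∀ x ∈ s, dist (f x) (F i x) ≤ u i) : TendstoUniformlyOn F f l s := by
  rw [Metric.tendstoUniformlyOn_iff]
  intro ε hε
  filter_upwards [hu.eventually (gt_mem_nhds hε)] with i hi x hx using (h i x hx).trans_lt hi

lemma Polynomial.derivative_surjective {K : Type*} [Field K] [CharZero K] :
    Function.Surjective (derivative : K[X] → K[X]) := by
  intro q
  induction q using Polynomial.induction_on' with
  | add q r hq hr =>
    obtain ⟨p, rfl⟩ := hq
    obtain ⟨p', rfl⟩ := hr
    exact ⟨p + p', derivative_add⟩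
  | monomial n c =>
    refine ⟨monomial (n + 1) (c / (n + 1)), ?_⟩
    rw [derivative_monomial, Nat.add_sub_cancel]
    congr 1
    push_cast
    field_simp

theorem exists_polynomial_tendstoUniformlyOn_of_contDiffOn {f : ℝ → ℝ} {U : Set ℝ}
    (hU : IsOpen U) (hf : ContDiffOn ℝ 1 f U) {a b : ℝ} (hab : Icc a b ⊆ U) :
    ∃ p : ℕ → ℝ[X], TendstoUniformlyOn (fun n x => (p n).eval x) f atTop (Icc a b) ∧
      TendstoUniformlyOn (fun n x => (derivative (p n)).eval x) (deriv f) atTop (Icc a b) := by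
  have hf' : ContinuousOn (deriv f) (Icc a b) :=
    (hf.continuousOn_deriv_of_isOpen hU le_rfl).mono hab
  have hdf : ∀ x ∈ Icc a b, HasDerivAt f (deriv f x) x := fun x hx =>
    ((hf.differentiableOn one_ne_zero).differentiableAt (hU.mem_nhds (hab hx))).hasDerivAt
  have approx : ∀ n : ℕ, ∃ p : ℝ[X], p.eval a = f a ∧
      ∀ x ∈ Icc a b, |(derivative p).eval x - deriv f x| < 1 / (n + 1) := by
    intro n
    obtain ⟨q, hq⟩ :=
      exists_polynomial_near_of_continuousOn a b _ hf' (1 / (n + 1)) (by positivity)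
    obtain ⟨p, rfl⟩ := derivative_surjective q
    exact ⟨p + C (f a - p.eval a), by simp, fun x hx => by simpa using hq x hx⟩
  choose p hpa hp' using approx
  refine ⟨p, tendstoUniformlyOn_of_dist_le (u := fun n : ℕ => (b - a) * (1 / (n + 1)))
    (by simpa using tendsto_one_div_add_atTop_nhds_zero_nat.const_mul (b - a)) fun n x hx => ?_,
    tendstoUniformlyOn_of_dist_le tendsto_one_div_add_atTop_nhds_zero_nat fun n x hx => ?_⟩
  · have hmvt := norm_image_sub_le_of_norm_deriv_le_segment'
      (f := fun y => (p n).eval y - f y) (C := 1 / (n + 1))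
      (fun y hy => (((p n).hasDerivAt y).sub (hdf y hy)).hasDerivWithinAt)
      (fun y hy => (hp' n y (Ico_subset_Icc_self hy)).le) x hx
    rw [hpa, sub_self, sub_zero, Real.norm_eq_abs, abs_sub_comm] at hmvt
    rw [Real.dist_eq, mul_comm]
    refine hmvt.trans ?_
    gcongr
    exact hx.2
  · rw [Real.dist_eq, abs_sub_comm]
    exact (hp' n x hx).le

lemma IsCompact.exists_subset_Icc_subset {K I : Set ℝ} (hK : IsCompact K) (hKI : K ⊆ I)
    (hI : I.OrdConnected) : ∃ a b, K ⊆ Icc a b ∧ Icc a b ⊆ I := by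
  rcases K.eq_empty_or_nonempty with rfl | hne
  · exact ⟨1, 0, empty_subset _, by simp⟩
  · exact ⟨sInf K, sSup K, hK.isBounded.subset_Icc_sInf_sSup,
      hI.out (hKI (hK.sInf_mem hne)) (hKI (hK.sSup_mem hne))⟩

theorem IsCompact.biUnion_spectrum {𝕜 A T : Type*} [NontriviallyNormedField 𝕜]
    [ProperSpace 𝕜] [NormedRing A] [NormedAlgebra 𝕜 A] [CompleteSpace A] [TopologicalSpace T]
    {γ : T → A} (hγ : Continuous γ) {S : Set T} (hS : IsCompact S) :
    IsCompact (⋃ t ∈ S, spectrum 𝕜 (γ t)) := by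
  obtain ⟨C, hC⟩ := (hS.image hγ).isBounded.exists_norm_le
  have hclosed : IsClosed {p : T × 𝕜 | p.2 ∈ spectrum 𝕜 (γ p.1)} :=
    Units.isOpen.isClosed_compl.preimage
      (by fun_prop : Continuous fun p : T × 𝕜 => algebraMap 𝕜 A p.2 - γ p.1)
  have hW := (hS.prod (isCompact_closedBall (0 : 𝕜) (C * ‖(1 : A)‖))).inter_right hclosed
  convert hW.image continuous_snd using 1
  ext x
  simp only [mem_iUnion, exists_prop, mem_image, mem_inter_iff, mem_prod, mem_ofPred_eq,
    Prod.exists, exists_eq_right]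
  refine ⟨fun ⟨t, ht, hx⟩ => ⟨t, ⟨ht, ?_⟩, hx⟩, fun ⟨t, ⟨ht, _⟩, hx⟩ => ⟨t, ht, hx⟩⟩
  exact closedBall_subset_closedBall (by gcongr; exact hC _ (mem_image_of_mem γ ht))
    (spectrum.subset_closedBall_norm_mul _ hx)

namespace Matrix

variable {𝕜 n : Type*} [RCLike 𝕜] [Fintype n] [DecidableEq n]

lemma norm_star_mul_mul_apply_self_le {U : Matrix n n 𝕜} (hU : U ∈ unitaryGroup n 𝕜)
    (X : Matrix n n 𝕜) (i : n) : ‖(star U * X * U) i i‖ ≤ ∑ j, ∑ k, ‖X j k‖ :=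
  calc ‖(star U * X * U) i i‖ = ‖∑ k, ∑ j, star (U j i) * X j k * U k i‖ := by
        simp [Matrix.mul_apply, Finset.sum_mul]
    _ ≤ ∑ k, ∑ j, ‖star (U j i) * X j k * U k i‖ :=
        (norm_sum_le _ _).trans (Finset.sum_le_sum fun k _ => norm_sum_le _ _)
    _ ≤ ∑ k, ∑ j, ‖X j k‖ := by
        gcongr with k _ j _
        rw [norm_mul, norm_mul, norm_star]
        calc ‖U j i‖ * ‖X j k‖ * ‖U k i‖ ≤ 1 * ‖X j k‖ * 1 := by
              gcongr <;> exact entry_norm_bound_of_unitary hU _ _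
          _ = ‖X j k‖ := by ring
    _ = ∑ j, ∑ k, ‖X j k‖ := Finset.sum_comm

lemma IsHermitian.trace_mul_cfc {M : Matrix n n 𝕜} (hM : M.IsHermitian) (X : Matrix n n 𝕜)
    (g : ℝ → ℝ) : (X * cfc g M).trace =
      ∑ i, (star (hM.eigenvectorUnitary : Matrix n n 𝕜) * X * hM.eigenvectorUnitary) i i *
        g (hM.eigenvalues i) := by
  rw [hM.cfc_eq, IsHermitian.cfc, Unitary.conjStarAlgAut_apply, ← Matrix.mul_assoc,
    ← Matrix.mul_assoc, Matrix.trace_mul_comm, ← Matrix.mul_assoc, ← Matrix.mul_assoc]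
  simp only [Matrix.trace, diag_apply, mul_diagonal, Function.comp_apply]

lemma IsHermitian.norm_trace_mul_cfc_sub_le {M : Matrix n n 𝕜} (hM : M.IsHermitian)
    (X : Matrix n n 𝕜) {g h : ℝ → ℝ} {η : ℝ} (hgh : ∀ x ∈ spectrum ℝ M, |g x - h x| ≤ η) :
    ‖(X * cfc g M).trace - (X * cfc h M).trace‖ ≤
      Fintype.card n * (∑ j, ∑ k, ‖X j k‖) * η := by
  rw [hM.trace_mul_cfc, hM.trace_mul_cfc, ← Finset.sum_sub_distrib]
  calc _ ≤ ∑ i : n, (∑ j, ∑ k, ‖X j k‖) * η := by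
        refine (norm_sum_le _ _).trans (Finset.sum_le_sum fun i _ => ?_)
        rw [← mul_sub, norm_mul, ← RCLike.ofReal_sub, RCLike.norm_ofReal]
        gcongr
        · exact norm_star_mul_mul_apply_self_le hM.eigenvectorUnitary.2 X i
        · exact hgh _ (hM.eigenvalues_mem_spectrum_real i)
    _ = _ := by rw [Finset.sum_const, Finset.card_univ, nsmul_eq_mul, mul_assoc]

theorem _root_.TendstoUniformlyOn.trace_mul_cfc {ι α : Type*} {l : Filter ι}
    {G : ι → ℝ → ℝ} {g : ℝ → ℝ} {K : Set ℝ} (hG : TendstoUniformlyOn G g l K)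
    (X : Matrix n n 𝕜) {M : α → Matrix n n 𝕜} {s : Set α} (hM : ∀ a ∈ s, (M a).IsHermitian)
    (hK : ∀ a ∈ s, spectrum ℝ (M a) ⊆ K) :
    TendstoUniformlyOn (fun i a => (X * cfc (G i) (M a)).trace)
      (fun a => (X * cfc g (M a)).trace) l s := by
  set C : ℝ := Fintype.card n * ∑ j, ∑ k, ‖X j k‖ + 1
  have hC : 0 < C := by positivity
  rw [Metric.tendstoUniformlyOn_iff] at hG ⊢
  intro ε hε
  filter_upwards [hG (ε / C) (by positivity)] with i hi a ha
  calc dist _ _ ≤ (C - 1) * (ε / C) := by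
        rw [dist_eq_norm]
        convert (hM a ha).norm_trace_mul_cfc_sub_le X fun x hx => (hi x (hK a ha hx)).le using 2
        ring
    _ < C * (ε / C) := by gcongr; linarith
    _ = ε := mul_div_cancel₀ ε hC.ne'

section LinftyOp

-- Any submultiplicative norm would do; none of the statements below mentions it.
attribute [local instance] Matrix.linftyOpNormedAddCommGroup Matrix.linftyOpNormedRing
  Matrix.linftyOpNormedAlgebra

lemma hasDerivAt_trace_pow_add_smul (A X : Matrix n n 𝕜) (k : ℕ) (t : ℝ) :
    HasDerivAt (fun s : ℝ => ((A + s • X) ^ k).trace)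
      (k * (X * (A + t • X) ^ (k - 1)).trace) t := by
  have hpow := ((traceLinearMap n 𝕜 𝕜).toContinuousLinearMap.restrictScalars ℝ).hasFDerivAt
    |>.comp_hasDerivAt t ((((hasDerivAt_id t).smul_const X).const_add A).fun_pow' k)
  refine hpow.congr_deriv ?_
  have hterm : ∀ i ∈ Finset.range k, ((A + t • X) ^ (k.pred - i) * X * (A + t • X) ^ i).trace =
      (X * (A + t • X) ^ (k - 1)).trace := by
    intro i hi
    rw [trace_mul_cycle, ← pow_add, trace_mul_comm, Nat.pred_eq_sub_one,
      Nat.add_sub_of_le (by have := Finset.mem_range.1 hi; omega)]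
  change (∑ i ∈ Finset.range k, (A + t • X) ^ (k.pred - i) * (1 : ℝ) • X * (A + t • X) ^ i).trace
    = _
  rw [one_smul, trace_sum, Finset.sum_congr rfl hterm, Finset.sum_const, Finset.card_range,
    nsmul_eq_mul]

lemma hasDerivAt_trace_aeval_add_smul (A X : Matrix n n 𝕜) (p : ℝ[X]) (t : ℝ) :
    HasDerivAt (fun s : ℝ => (aeval (A + s • X) p).trace)
      ((X * aeval (A + t • X) (derivative p)).trace) t := by
  induction p using Polynomial.induction_on' with
  | add p q hp hq => simpa only [map_add, Matrix.mul_add, trace_add] using hp.fun_add hq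
  | monomial k c =>
    convert (hasDerivAt_trace_pow_add_smul A X k t).const_mul (c : 𝕜) using 1
    · ext s
      simp [aeval_monomial, Algebra.algebraMap_eq_smul_one]
    · simp [aeval_monomial, derivative_monomial, Algebra.algebraMap_eq_smul_one]
      rw [RCLike.real_smul_eq_coe_mul, RCLike.real_smul_eq_coe_mul]
      push_cast
      ring

lemma isCompact_biUnion_spectrum_add_smul (A X : Matrix n n 𝕜) {S : Set ℝ} (hS : IsCompact S) :
    IsCompact (⋃ t ∈ S, spectrum ℝ (A + t • X)) :=
  hS.biUnion_spectrum (γ := fun t : ℝ => A + t • X) (by fun_prop)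

end LinftyOp

theorem IsHermitian.hasDerivAt_trace_cfc_add_smul {A X : Matrix n n 𝕜} (hA : A.IsHermitian)
    (hX : X.IsHermitian) {f : ℝ → ℝ} {I : Set ℝ} (hI : IsOpen I) (hIc : I.OrdConnected)
    (hf : ContDiffOn ℝ 1 f I) {t₀ : ℝ} (hspec : ∀ᶠ t in 𝓝 t₀, spectrum ℝ (A + t • X) ⊆ I) :
    HasDerivAt (fun t : ℝ => (cfc f (A + t • X)).trace)
      ((X * cfc (deriv f) (A + t₀ • X)).trace) t₀ := by
  have hM : ∀ t : ℝ, (A + t • X).IsHermitian := fun t => hA.add (hX.smul (IsSelfAdjoint.all t))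
  obtain ⟨r, hr, hrI⟩ := Metric.eventually_nhds_iff_ball.1 hspec
  obtain ⟨a, b, hKab, habI⟩ := (isCompact_biUnion_spectrum_add_smul A X
    (isCompact_closedBall t₀ (r / 2))).exists_subset_Icc_subset
    (iUnion₂_subset fun t ht => hrI t (closedBall_subset_ball (half_lt_self hr) ht)) hIc
  have hspecab : ∀ t ∈ ball t₀ (r / 2), spectrum ℝ (A + t • X) ⊆ Icc a b := fun t ht =>
    (subset_biUnion_of_mem (u := fun t => spectrum ℝ (A + t • X))
      (ball_subset_closedBall ht)).trans hKab
  obtain ⟨p, hp, hp'⟩ := exists_polynomial_tendstoUniformlyOn_of_contDiffOn hI hf habI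
  have hpoly : ∀ (q : ℝ[X]) (t : ℝ), cfc (fun x => q.eval x) (A + t • X) = aeval (A + t • X) q :=
    fun q t => cfc_polynomial q _ (hM t).isSelfAdjoint
  refine hasDerivAt_of_tendstoUniformlyOn
    (f := fun k t => (cfc (fun x => (p k).eval x) (A + t • X)).trace) isOpen_ball
    (hp'.trace_mul_cfc X (fun t _ => hM t) hspecab) (Eventually.of_forall fun k t _ => ?_)
    (fun t ht => ?_) (mem_ball_self (half_pos hr))
  · simpa only [hpoly] using hasDerivAt_trace_aeval_add_smul A X (p k) t
  · simpa only [one_mul] using (hp.trace_mul_cfc 1 (fun t _ => hM t) hspecab).tendsto_at ht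

end Matrix

/-- Derivative of `t ↦ Tr f(A + tX)` for Hermitian `A`, `X` and a `C¹` function `f`
on an open interval containing the relevant spectra:
`(d/dt) Tr f(A + tX) |_{t=t₀} = Tr[X f'(A + t₀ X)]`. -/
theorem hasDerivAt_trace_cfc
    {d : ℕ} (A X : Matrix (Fin d) (Fin d) ℂ)
    (hA : A.IsHermitian) (hX : X.IsHermitian)
    (f : ℝ → ℝ) (I : Set ℝ) (hI : IsOpen I) (hIint : Convex ℝ I)
    (hf : ContDiffOn ℝ 1 f I) (t₀ : ℝ) (δ : ℝ) (hδ : 0 < δ)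
    (hspec : ∀ t : ℝ, |t - t₀| < δ → spectrum ℝ (A + t • X) ⊆ I) :
    HasDerivAt (fun t : ℝ => (cfc f (A + t • X)).trace.re)
      ((X * cfc (deriv f) (A + t₀ • X)).trace.re) t₀ :=
  Complex.reCLM.hasFDerivAt.comp_hasDerivAt t₀ <| hA.hasDerivAt_trace_cfc_add_smul hX hI
    hIint.ordConnected hf <| Metric.eventually_nhds_iff.2 ⟨δ, hδ, fun t ht => hspec t ht⟩
end

section
/- Let Ω be a finite set with probability measure μ, and let K_x (x ∈ Ω) be d×d complex matrices satisfying Σ_x μ(x) K_x K_x† = I. Then for every convex function φ : I → ℝ on an interval I and every f : Ω → M_d^sa with all spectra of f(x) in I, Tr[φ(Σ_x μ(x) K_x f(x) K_x†)] ≤ Σ_x μ(x) Tr[K_x φ(f(x)) K_x†]. -/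
/-!
Let `vᵢ` be an orthonormal eigenbasis of `A = ∑ₓ μₓ Kₓ f(x) Kₓ†`, with eigenvalues `λᵢ`, and put
`wₓᵢ = Kₓ† vᵢ`. Then `λᵢ = ∑ₓ μₓ ⟨wₓᵢ, f(x) wₓᵢ⟩` and, by `∑ₓ μₓ Kₓ Kₓ† = 1`,
`∑ₓ μₓ ‖wₓᵢ‖² = 1`. Expanding `wₓᵢ` in an eigenbasis of `f(x)` writes `λᵢ` as a convex
combination of eigenvalues of the `f(x)`, so scalar Jensen gives
`φ(λᵢ) ≤ ∑ₓ μₓ ⟨wₓᵢ, φ(f(x)) wₓᵢ⟩`. Summing over `i` turns both sides into traces.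
-/

open Matrix

namespace Matrix

variable {𝕜 n : Type*} [RCLike 𝕜] [Fintype n]

theorem star_dotProduct_orthonormalBasis_self (b : OrthonormalBasis n 𝕜 (EuclideanSpace 𝕜 n))
    (i : n) : star ⇑(b i) ⬝ᵥ ⇑(b i) = 1 := by
  rw [dotProduct_comm, ← EuclideanSpace.inner_eq_star_dotProduct, b.inner_eq_one]

theorem trace_eq_sum_star_dotProduct_mulVec (M : Matrix n n 𝕜)
    (b : OrthonormalBasis n 𝕜 (EuclideanSpace 𝕜 n)) :
    M.trace = ∑ i, star ⇑(b i) ⬝ᵥ M *ᵥ ⇑(b i) := by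
  classical
  have htr : LinearMap.trace 𝕜 _ (toEuclideanLin M) = M.trace := by
    rw [← trace_toLin'_eq, ← LinearMap.trace_conj' _ (WithLp.linearEquiv 2 𝕜 (n → 𝕜)).symm]
    rfl
  rw [← htr, LinearMap.trace_eq_sum_inner _ b]
  simp only [EuclideanSpace.inner_eq_star_dotProduct, toLpLin_apply, dotProduct_comm]

section Compression

variable {ι m : Type*} [Fintype ι] [Fintype m]

theorem star_dotProduct_mul_mul_conjTranspose_mulVec (K : Matrix m n 𝕜) (B : Matrix n n 𝕜)
    (v : m → 𝕜) : star v ⬝ᵥ (K * B * Kᴴ) *ᵥ v = star (Kᴴ *ᵥ v) ⬝ᵥ B *ᵥ (Kᴴ *ᵥ v) := by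
  rw [← mulVec_mulVec, ← mulVec_mulVec, dotProduct_mulVec, star_mulVec,
    conjTranspose_conjTranspose]

theorem re_star_dotProduct_sum_smul_mulVec (μ : ι → ℝ) (K : ι → Matrix m n 𝕜)
    (B : ι → Matrix n n 𝕜) (v : m → 𝕜) :
    RCLike.re (star v ⬝ᵥ (∑ x, μ x • (K x * B x * (K x)ᴴ)) *ᵥ v) =
      ∑ x, μ x * RCLike.re (star ((K x)ᴴ *ᵥ v) ⬝ᵥ B x *ᵥ ((K x)ᴴ *ᵥ v)) := by
  rw [sum_mulVec, dotProduct_sum, map_sum]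
  refine Finset.sum_congr rfl fun x _ => ?_
  rw [smul_mulVec, dotProduct_smul, RCLike.smul_re, star_dotProduct_mul_mul_conjTranspose_mulVec]

end Compression

variable [DecidableEq n] {A : Matrix n n 𝕜}

namespace IsHermitian

theorem cfc_mulVec_eigenvectorBasis (hA : A.IsHermitian) (g : ℝ → ℝ) (j : n) :
    cfc g A *ᵥ ⇑(hA.eigenvectorBasis j) =
      (g (hA.eigenvalues j) : 𝕜) • ⇑(hA.eigenvectorBasis j) := by
  rw [hA.cfc_eq, IsHermitian.cfc, Unitary.conjStarAlgAut_apply, ← mulVec_mulVec,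
    star_eigenvectorUnitary_mulVec, ← mulVec_mulVec, diagonal_mulVec_single, mul_one,
    ← eigenvectorUnitary_mulVec, ← mulVec_smul, ← Pi.single_smul', smul_eq_mul, mul_one]
  rfl

theorem trace_cfc (hA : A.IsHermitian) (g : ℝ → ℝ) :
    (cfc g A).trace = ∑ i, (g (hA.eigenvalues i) : 𝕜) := by
  rw [trace_eq_sum_star_dotProduct_mulVec _ hA.eigenvectorBasis]
  refine Finset.sum_congr rfl fun i _ => ?_
  rw [hA.cfc_mulVec_eigenvectorBasis, dotProduct_smul, star_dotProduct_orthonormalBasis_self,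
    smul_eq_mul, mul_one]

theorem re_star_dotProduct_cfc_mulVec (hA : A.IsHermitian) (g : ℝ → ℝ) (w : n → 𝕜) :
    RCLike.re (star w ⬝ᵥ cfc g A *ᵥ w) =
      ∑ j, g (hA.eigenvalues j) * ‖star ⇑(hA.eigenvectorBasis j) ⬝ᵥ w‖ ^ 2 := by
  set U : Matrix n n 𝕜 := (hA.eigenvectorUnitary : Matrix n n 𝕜)
  have hU : star w ᵥ* U = star (star U *ᵥ w) := by
    rw [star_mulVec, star_eq_conjTranspose, conjTranspose_conjTranspose]
  have hcoord (j : n) : (star U *ᵥ w) j = star ⇑(hA.eigenvectorBasis j) ⬝ᵥ w := rfl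
  rw [hA.cfc_eq, IsHermitian.cfc, Unitary.conjStarAlgAut_apply, ← mulVec_mulVec,
    ← mulVec_mulVec, dotProduct_mulVec, hU, dotProduct, map_sum]
  refine Finset.sum_congr rfl fun j _ => ?_
  rw [mulVec_diagonal, Pi.star_apply, hcoord, Function.comp_apply, Function.comp_apply,
    mul_left_comm, RCLike.star_def, RCLike.conj_mul, ← RCLike.ofReal_pow, ← RCLike.ofReal_mul,
    RCLike.ofReal_re]

end IsHermitian

end Matrix

theorem ConvexOn.map_sum_re_star_dotProduct_mulVec_le {𝕜 n ι : Type*} [RCLike 𝕜] [Fintype n]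
    [DecidableEq n] [Fintype ι] {s : Set ℝ} {φ : ℝ → ℝ} (hφ : ConvexOn ℝ s φ) {μ : ι → ℝ}
    (hμ : ∀ x, 0 ≤ μ x) {B : ι → Matrix n n 𝕜} (hB : ∀ x, (B x).IsHermitian)
    (hspec : ∀ x, spectrum ℝ (B x) ⊆ s) {w : ι → n → 𝕜}
    (hw : ∑ x, μ x * RCLike.re (star (w x) ⬝ᵥ w x) = 1) :
    φ (∑ x, μ x * RCLike.re (star (w x) ⬝ᵥ B x *ᵥ w x)) ≤
      ∑ x, μ x * RCLike.re (star (w x) ⬝ᵥ cfc φ (B x) *ᵥ w x) := by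
  set c : ι × n → ℝ := fun p => μ p.1 * ‖star ⇑((hB p.1).eigenvectorBasis p.2) ⬝ᵥ w p.1‖ ^ 2
  have hexpand (g : ℝ → ℝ) (x : ι) : μ x * RCLike.re (star (w x) ⬝ᵥ cfc g (B x) *ᵥ w x) =
      ∑ j, c (x, j) * g ((hB x).eigenvalues j) := by
    rw [(hB x).re_star_dotProduct_cfc_mulVec, Finset.mul_sum]
    exact Finset.sum_congr rfl fun j _ => by ring
  have hmean (x : ι) : μ x * RCLike.re (star (w x) ⬝ᵥ B x *ᵥ w x) =
      ∑ j, c (x, j) * (hB x).eigenvalues j := by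
    simpa only [cfc_id' ℝ (B x) (hB x).isSelfAdjoint] using hexpand (fun t => t) x
  have hweight (x : ι) : μ x * RCLike.re (star (w x) ⬝ᵥ w x) = ∑ j, c (x, j) := by
    simpa only [cfc_const_one ℝ (B x) (hB x).isSelfAdjoint, one_mulVec, mul_one]
      using hexpand (fun _ => 1) x
  calc φ (∑ x, μ x * RCLike.re (star (w x) ⬝ᵥ B x *ᵥ w x))
      = φ (∑ p, c p • (hB p.1).eigenvalues p.2) := by
        simp only [hmean, smul_eq_mul, Fintype.sum_prod_type]
    _ ≤ ∑ p, c p • φ ((hB p.1).eigenvalues p.2) :=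
        hφ.map_sum_le (fun p _ => mul_nonneg (hμ p.1) (sq_nonneg _))
          (by simpa only [hweight, Fintype.sum_prod_type] using hw)
          (fun p _ => hspec p.1 ((hB p.1).eigenvalues_mem_spectrum_real p.2))
    _ = ∑ x, μ x * RCLike.re (star (w x) ⬝ᵥ cfc φ (B x) *ᵥ w x) := by
        simp only [hexpand φ, smul_eq_mul, Fintype.sum_prod_type]

theorem trace_operator_jensen_general
    {Ω : Type*} [Fintype Ω] {d : ℕ}
    (μ : Ω → ℝ) (hμ : ∀ x, 0 ≤ μ x)
    (K : Ω → Matrix (Fin d) (Fin d) ℂ)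
    (hK : ∑ x, μ x • (K x * (K x)ᴴ) = (1 : Matrix (Fin d) (Fin d) ℂ))
    (I : Set ℝ)
    (φ : ℝ → ℝ) (hφ : ConvexOn ℝ I φ)
    (f : Ω → Matrix (Fin d) (Fin d) ℂ) (hf : ∀ x, (f x).IsHermitian)
    (hspec : ∀ x, spectrum ℝ (f x) ⊆ I) :
    (cfc φ (∑ x, μ x • (K x * f x * (K x)ᴴ))).trace.re ≤
      ∑ x, μ x * (K x * cfc φ (f x) * (K x)ᴴ).trace.re := by
  set A := ∑ x, μ x • (K x * f x * (K x)ᴴ)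
  have hA : A.IsHermitian := isSelfAdjoint_sum _ fun x _ =>
    .smul (.all (μ x)) (isHermitian_mul_mul_conjTranspose (K x) (hf x))
  set v := hA.eigenvectorBasis
  have hjensen (i : Fin d) : φ (hA.eigenvalues i) ≤
      ∑ x, μ x * RCLike.re (star ((K x)ᴴ *ᵥ v i) ⬝ᵥ cfc φ (f x) *ᵥ ((K x)ᴴ *ᵥ v i)) := by
    rw [hA.eigenvalues_eq, re_star_dotProduct_sum_smul_mulVec]
    refine hφ.map_sum_re_star_dotProduct_mulVec_le hμ hf hspec ?_
    have hunit := re_star_dotProduct_sum_smul_mulVec μ K (fun _ => 1) (v i)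
    simp only [Matrix.mul_one, one_mulVec, hK, star_dotProduct_orthonormalBasis_self,
      RCLike.one_re] at hunit
    exact hunit.symm
  calc (cfc φ A).trace.re = ∑ i, φ (hA.eigenvalues i) := by
        simp only [hA.trace_cfc, Complex.coe_algebraMap, Complex.re_sum, Complex.ofReal_re]
    _ ≤ ∑ i, ∑ x, μ x * RCLike.re (star ((K x)ᴴ *ᵥ v i) ⬝ᵥ cfc φ (f x) *ᵥ ((K x)ᴴ *ᵥ v i)) :=
        Finset.sum_le_sum fun i _ => hjensen i
    _ = ∑ x, μ x * (K x * cfc φ (f x) * (K x)ᴴ).trace.re := by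
        rw [Finset.sum_comm]
        simp only [trace_eq_sum_star_dotProduct_mulVec _ v, Complex.re_sum, Finset.mul_sum,
          star_dotProduct_mul_mul_conjTranspose_mulVec, RCLike.re_to_complex]

/-- Trace operator Jensen inequality for matrix-valued (unital completely positive)
averages: if `∑ₓ μ(x) Kₓ Kₓ† = I`, then for convex `φ` on an interval `I` and
Hermitian-valued `f` with spectra in `I`,
`Tr φ(∑ₓ μ(x) Kₓ f(x) Kₓ†) ≤ ∑ₓ μ(x) Tr[Kₓ φ(f(x)) Kₓ†]`. -/
theorem trace_operator_jensen
    {Ω : Type*} [Fintype Ω] {d : ℕ}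
    (μ : Ω → ℝ) (hμ : ∀ x, 0 ≤ μ x) (hμ1 : ∑ x, μ x = 1)
    (K : Ω → Matrix (Fin d) (Fin d) ℂ)
    (hK : ∑ x, μ x • (K x * (K x)ᴴ) = (1 : Matrix (Fin d) (Fin d) ℂ))
    (I : Set ℝ) (hI : Convex ℝ I)
    (φ : ℝ → ℝ) (hφ : ConvexOn ℝ I φ) (hφc : ContinuousOn φ I)
    (f : Ω → Matrix (Fin d) (Fin d) ℂ) (hf : ∀ x, (f x).IsHermitian)
    (hspec : ∀ x, spectrum ℝ (f x) ⊆ I) :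
    (cfc φ (∑ x, μ x • (K x * f x * (K x)ᴴ))).trace.re ≤
      ∑ x, μ x * (K x * cfc φ (f x) * (K x)ᴴ).trace.re :=
  trace_operator_jensen_general μ hμ K hK I φ hφ f hf hspec
end

section
/- Let Ω be a finite set with probability measure μ, and suppose {P_t}_{t≥0} is a family of linear maps on functions f : Ω → M_d^sa such that P_t f(x) = Σ_y T_t(x,y)(f(y)) where each T_t(x,y) is completely positive, Σ_y T_t(x,y) is unital and trace-preserving, and μ is invariant (Σ_x μ(x) P_t f(x) = Σ_x μ(x) f(x) for all t, f). Then for every convex Φ : [0,∞) → ℝ and every f with positive semi-definite values, H_Φ(P_t f) ≤ H_Φ(f) for all t ≥ 0. -/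
open Matrix
open scoped ComplexOrder

/-- A linear map on `d × d` matrices is completely positive iff it admits a Kraus
decomposition `T(A) = ∑ᵢ Kᵢ A Kᵢ†`. -/
def IsCompletelyPositive {d : ℕ}
    (T : Matrix (Fin d) (Fin d) ℂ →ₗ[ℂ] Matrix (Fin d) (Fin d) ℂ) : Prop :=
  ∃ (m : ℕ) (K : Fin m → Matrix (Fin d) (Fin d) ℂ),
    ∀ A, T A = ∑ i, K i * A * (K i)ᴴ

/-- The matrix `Φ`-entropy `H_Φ(g) = Tr[∑ₓ μ(x) Φ(g(x)) − Φ(∑ₓ μ(x) g(x))]`. -/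
noncomputable def matrixPhiEntropy {Ω : Type*} [Fintype Ω] {d : ℕ}
    (μ : Ω → ℝ) (Φ : ℝ → ℝ) (g : Ω → Matrix (Fin d) (Fin d) ℂ) : ℝ :=
  ((∑ x, μ x • cfc Φ (g x)) - cfc Φ (∑ x, μ x • g x)).trace.re

/-!
By invariance of `μ` the terms `Φ(∑ₓ μ(x) g(x))` of both entropies coincide, so it suffices to
prove, for each row `Ψ_y = T_t(x, y)`, the trace Jensen inequality
`tr Φ(∑_y Ψ_y(f_y)) ≤ tr ∑_y Ψ_y(Φ(f_y))` and average it against `μ`. Take an eigenbasis `(u_j)`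
of `M = ∑_y Ψ_y(f_y)`. The `j`-th eigenvalue of `M` is `ω_j(f)`, where
`ω_j(g) = ∑_y re ⟪u_j, Ψ_y(g_y) u_j⟫` is a positive unital functional. Expanding each `f_y` in
its spectral decomposition makes `ω_j(f)` a convex combination of the eigenvalues of the `f_y`,
and scalar Jensen gives `Φ(ω_j(f)) ≤ ω_j(Φ ∘ f)`; summing over `j` yields the trace inequality.
-/

namespace Matrix.IsHermitian

variable {𝕜 n : Type*} [RCLike 𝕜] [Fintype n] [DecidableEq n] {A : Matrix n n 𝕜}
  (hA : A.IsHermitian)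

noncomputable def eigenprojection (k : n) : Matrix n n 𝕜 :=
  (hA.eigenvectorUnitary : Matrix n n 𝕜) * single k k 1 *
    star (hA.eigenvectorUnitary : Matrix n n 𝕜)

lemma posSemidef_eigenprojection (k : n) : (hA.eigenprojection k).PosSemidef := by
  rw [eigenprojection, star_eq_conjTranspose, ← diagonal_single]
  exact (PosSemidef.diagonal (Pi.single_nonneg.mpr zero_le_one)).mul_mul_conjTranspose_same _

lemma sum_eigenprojection : ∑ k, hA.eigenprojection k = 1 := by
  simp only [eigenprojection, ← Finset.sum_mul, ← Finset.mul_sum, sum_single_one, mul_one]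
  exact Unitary.coe_mul_star_self _

lemma cfc_eq_sum_smul_eigenprojection (g : ℝ → ℝ) :
    cfc g A = ∑ k, g (hA.eigenvalues k) • hA.eigenprojection k := by
  rw [hA.cfc_eq, IsHermitian.cfc, Unitary.conjStarAlgAut_apply, ← sum_single_eq_diagonal]
  simp only [eigenprojection, Finset.mul_sum, Finset.sum_mul]
  refine Finset.sum_congr rfl fun k _ => ?_
  have hsingle :
      single k k (g (hA.eigenvalues k) : 𝕜) = (g (hA.eigenvalues k) : 𝕜) • single k k 1 := by
    rw [smul_single, smul_eq_mul, mul_one]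
  rw [RCLike.real_smul_eq_coe_smul (K := 𝕜), Function.comp_apply, Function.comp_apply, hsingle,
    mul_smul_comm, smul_mul_assoc]

lemma star_eigenvectorUnitary_mul_cfc_mul_eigenvectorUnitary (g : ℝ → ℝ) :
    star (hA.eigenvectorUnitary : Matrix n n 𝕜) * cfc g A * hA.eigenvectorUnitary =
      diagonal fun k => (g (hA.eigenvalues k) : 𝕜) := by
  rw [hA.cfc_eq, IsHermitian.cfc, Unitary.conjStarAlgAut_apply]
  simp only [mul_assoc, Unitary.coe_star_mul_self, mul_one]
  rw [← mul_assoc, Unitary.coe_star_mul_self, one_mul]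
  rfl

end Matrix.IsHermitian

namespace Matrix

variable {𝕜 n ι : Type*} [RCLike 𝕜] [Fintype n] [DecidableEq n] [Fintype ι]

/-- The vector state `B ↦ re ⟪U eⱼ, B U eⱼ⟫` of the `j`-th column of `U`. -/
noncomputable def columnState (U : unitaryGroup n 𝕜) (j : n) : Matrix n n 𝕜 →ₗ[ℝ] ℝ where
  toFun B := RCLike.re ((star (U : Matrix n n 𝕜) * B * U) j j)
  map_add' B C := by simp [mul_add, add_mul]
  map_smul' r B := by simp [RCLike.smul_re]

lemma columnState_nonneg (U : unitaryGroup n 𝕜) (j : n) {B : Matrix n n 𝕜}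
    (hB : B.PosSemidef) : 0 ≤ columnState U j B := by
  have := (hB.conjTranspose_mul_mul_same (U : Matrix n n 𝕜)).diag_nonneg (i := j)
  exact (RCLike.nonneg_iff.mp this).1

@[simp]
lemma columnState_one (U : unitaryGroup n 𝕜) (j : n) : columnState U j 1 = 1 := by
  simp [columnState]

lemma sum_columnState (U : unitaryGroup n 𝕜) (B : Matrix n n 𝕜) :
    ∑ j, columnState U j B = RCLike.re B.trace := by
  simp only [columnState, LinearMap.coe_mk, AddHom.coe_mk, ← map_sum]
  change RCLike.re (trace (star (U : Matrix n n 𝕜) * B * (U : Matrix n n 𝕜))) = _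
  rw [trace_mul_cycle, Unitary.mul_star_self_of_mem U.2, one_mul]

lemma IsHermitian.columnState_cfc {A : Matrix n n 𝕜} (hA : A.IsHermitian) (g : ℝ → ℝ) (j : n) :
    columnState hA.eigenvectorUnitary j (cfc g A) = g (hA.eigenvalues j) := by
  simp [columnState, hA.star_eigenvectorUnitary_mul_cfc_mul_eigenvectorUnitary]

lemma IsHermitian.columnState_eigenvectorUnitary {A : Matrix n n 𝕜} (hA : A.IsHermitian) (j : n) :
    columnState hA.eigenvectorUnitary j A = hA.eigenvalues j := by
  simpa only [cfc_id' ℝ A] using hA.columnState_cfc (fun x => x) j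


theorem _root_.ConvexOn.map_sum_le_sum_cfc {s : Set ℝ} {Φ : ℝ → ℝ} (hΦ : ConvexOn ℝ s Φ)
    (ω : ι → Matrix n n 𝕜 →ₗ[ℝ] ℝ) (hω : ∀ y B, B.PosSemidef → 0 ≤ ω y B)
    (hω1 : ∑ y, ω y 1 = 1) {A : ι → Matrix n n 𝕜} (hA : ∀ y, (A y).IsHermitian)
    (hs : ∀ y, spectrum ℝ (A y) ⊆ s) :
    Φ (∑ y, ω y (A y)) ≤ ∑ y, ω y (cfc Φ (A y)) := by
  set w : ι × n → ℝ := fun p => ω p.1 ((hA p.1).eigenprojection p.2)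
  set a : ι × n → ℝ := fun p => (hA p.1).eigenvalues p.2
  have hω_cfc (g : ℝ → ℝ) : ∑ y, ω y (cfc g (A y)) = ∑ p, w p • g (a p) := by
    simp [Fintype.sum_prod_type, w, a, (hA _).cfc_eq_sum_smul_eigenprojection g, mul_comm]
  have hw_nonneg : ∀ p ∈ Finset.univ, 0 ≤ w p :=
    fun p _ => hω _ _ ((hA p.1).posSemidef_eigenprojection p.2)
  have hw_sum : ∑ p, w p = 1 := by
    simp only [w, Fintype.sum_prod_type, ← map_sum, (hA _).sum_eigenprojection, hω1]
  have ha_mem : ∀ p ∈ Finset.univ, a p ∈ s :=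
    fun p _ => hs p.1 ((hA p.1).eigenvalues_mem_spectrum_real p.2)
  have hω_id : ∑ y, ω y (A y) = ∑ p, w p • a p := by
    simpa only [cfc_id' ℝ (A _) (hA _).isSelfAdjoint] using hω_cfc fun x => x
  rw [hω_id, hω_cfc]
  exact hΦ.map_sum_le hw_nonneg hw_sum ha_mem

open scoped MatrixOrder in
theorem re_trace_cfc_sum_le_re_trace_sum_cfc {Φ : ℝ → ℝ} (hΦ : ConvexOn ℝ (Set.Ici 0) Φ)
    (Ψ : ι → Matrix n n 𝕜 →ₗ[𝕜] Matrix n n 𝕜) (hΨ : ∀ y B, B.PosSemidef → (Ψ y B).PosSemidef)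
    (hΨ1 : ∑ y, Ψ y 1 = 1) {A : ι → Matrix n n 𝕜} (hA : ∀ y, (A y).PosSemidef) :
    RCLike.re (cfc Φ (∑ y, Ψ y (A y))).trace ≤ RCLike.re (∑ y, Ψ y (cfc Φ (A y))).trace := by
  set M := ∑ y, Ψ y (A y)
  have hM : M.PosSemidef := posSemidef_sum _ fun y _ => hΨ y _ (hA y)
  set U := hM.1.eigenvectorUnitary
  let ω : n → ι → Matrix n n 𝕜 →ₗ[ℝ] ℝ :=
    fun j y => (columnState U j).comp ((Ψ y).restrictScalars ℝ)
  have hjensen (j : n) : Φ (∑ y, ω j y (A y)) ≤ ∑ y, ω j y (cfc Φ (A y)) :=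
    hΦ.map_sum_le_sum_cfc (ω j) (fun y _ hB => columnState_nonneg U j (hΨ y _ hB))
      (by simp [ω, ← map_sum, hΨ1]) (fun y => (hA y).isHermitian)
      (fun y _ hx => spectrum_nonneg_of_nonneg (nonneg_iff_posSemidef.mpr (hA y)) hx)
  calc RCLike.re (cfc Φ M).trace
      = ∑ j, Φ (hM.1.eigenvalues j) := by simp [← sum_columnState U, U, hM.1.columnState_cfc]
    _ = ∑ j, Φ (∑ y, ω j y (A y)) := by
        simp [ω, ← map_sum, M, U, hM.1.columnState_eigenvectorUnitary]
    _ ≤ ∑ j, ∑ y, ω j y (cfc Φ (A y)) := Finset.sum_le_sum fun j _ => hjensen j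
    _ = RCLike.re (∑ y, Ψ y (cfc Φ (A y))).trace := by
        rw [← sum_columnState U]
        exact Finset.sum_congr rfl fun j _ => (map_sum (columnState U j) _ _).symm

end Matrix

lemma Matrix.re_trace_sum_smul {Ω n : Type*} [Fintype Ω] [Fintype n] (μ : Ω → ℝ)
    (B : Ω → Matrix n n ℂ) : (∑ x, μ x • B x).trace.re = ∑ x, μ x * (B x).trace.re := by
  simp [trace_sum, Complex.real_smul]

lemma IsCompletelyPositive.posSemidef_apply {d : ℕ}
    {T : Matrix (Fin d) (Fin d) ℂ →ₗ[ℂ] Matrix (Fin d) (Fin d) ℂ} (hT : IsCompletelyPositive T)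
    {A : Matrix (Fin d) (Fin d) ℂ} (hA : A.PosSemidef) : (T A).PosSemidef := by
  obtain ⟨m, K, hK⟩ := hT
  rw [hK]
  exact posSemidef_sum _ fun i _ => hA.mul_mul_conjTranspose_same (K i)

theorem matrix_phi_entropy_monotone_general
    {Ω : Type*} [Fintype Ω] {d : ℕ}
    (μ : Ω → ℝ) (hμ : ∀ x, 0 ≤ μ x)
    (T : ℝ → Ω → Ω → (Matrix (Fin d) (Fin d) ℂ →ₗ[ℂ] Matrix (Fin d) (Fin d) ℂ))
    (hCP : ∀ t, 0 ≤ t → ∀ x y, IsCompletelyPositive (T t x y))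
    (hunital : ∀ t, 0 ≤ t → ∀ x,
      (∑ y, T t x y (1 : Matrix (Fin d) (Fin d) ℂ)) = 1)
    (hinv : ∀ t, 0 ≤ t → ∀ g : Ω → Matrix (Fin d) (Fin d) ℂ,
      (∑ x, μ x • ∑ y, T t x y (g y)) = ∑ x, μ x • g x)
    (Φ : ℝ → ℝ) (hΦ : ConvexOn ℝ (Set.Ici 0) Φ)
    (f : Ω → Matrix (Fin d) (Fin d) ℂ) (hf : ∀ x, (f x).PosSemidef)
    (t : ℝ) (ht : 0 ≤ t) :
    matrixPhiEntropy μ Φ (fun x => ∑ y, T t x y (f y)) ≤ matrixPhiEntropy μ Φ f := by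
  have hjensen (x : Ω) :
      (cfc Φ (∑ y, T t x y (f y))).trace.re ≤ (∑ y, T t x y (cfc Φ (f y))).trace.re :=
    re_trace_cfc_sum_le_re_trace_sum_cfc hΦ (T t x)
      (fun y _ hB => (hCP t ht x y).posSemidef_apply hB) (hunital t ht x) hf
  rw [matrixPhiEntropy, matrixPhiEntropy, hinv t ht f, trace_sub, trace_sub, Complex.sub_re,
    Complex.sub_re, ← hinv t ht fun y => cfc Φ (f y), re_trace_sum_smul, re_trace_sum_smul]
  exact sub_le_sub_right
    (Finset.sum_le_sum fun x _ => mul_le_mul_of_nonneg_left (hjensen x) (hμ x)) _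

/-- Monotonicity of the matrix `Φ`-entropy under a Markov semigroup of completely
positive, unital, trace-preserving kernels admitting `μ` as invariant measure. -/
theorem matrix_phi_entropy_monotone
    {Ω : Type*} [Fintype Ω] {d : ℕ}
    (μ : Ω → ℝ) (hμ : ∀ x, 0 ≤ μ x) (hμ1 : ∑ x, μ x = 1)
    (T : ℝ → Ω → Ω → (Matrix (Fin d) (Fin d) ℂ →ₗ[ℂ] Matrix (Fin d) (Fin d) ℂ))
    (hCP : ∀ t, 0 ≤ t → ∀ x y, IsCompletelyPositive (T t x y))
    (hunital : ∀ t, 0 ≤ t → ∀ x,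
      (∑ y, T t x y (1 : Matrix (Fin d) (Fin d) ℂ)) = 1)
    (hTP : ∀ t, 0 ≤ t → ∀ x (A : Matrix (Fin d) (Fin d) ℂ),
      (∑ y, T t x y A).trace = A.trace)
    (hinv : ∀ t, 0 ≤ t → ∀ g : Ω → Matrix (Fin d) (Fin d) ℂ,
      (∑ x, μ x • ∑ y, T t x y (g y)) = ∑ x, μ x • g x)
    (Φ : ℝ → ℝ) (hΦ : ConvexOn ℝ (Set.Ici 0) Φ)
    (f : Ω → Matrix (Fin d) (Fin d) ℂ) (hf : ∀ x, (f x).PosSemidef)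
    (t : ℝ) (ht : 0 ≤ t) :
    matrixPhiEntropy μ Φ (fun x => ∑ y, T t x y (f y)) ≤ matrixPhiEntropy μ Φ f :=
  matrix_phi_entropy_monotone_general μ hμ T hCP hunital hinv Φ hΦ f hf t ht
end

section
/- For p ∈ (0,1), the function f(p) = (1/2 + p) log p + (3/2 − p) log(1 − p) is concave on (0,1) and attains its maximum value −2 log 2 at p = 1/2. -/
/-!
Writing `g x = (x + 1/2) log x`, the function is `f p = g p + g (1 - p)`, so it is symmetric under
`p ↦ 1 - p`. Since `g'' x = (2x - 1) / (2x²)`, one gets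
`f'' p = g'' p + g'' (1 - p) = -(2p - 1)² / (2p²(1 - p)²) ≤ 0`, so `f` is concave; a concave
function taking equal values at `p` and `1 - p` is at least that large at their midpoint `1/2`.
-/

open Real Set

noncomputable def halfShiftedMulLog (x : ℝ) : ℝ := (x + 1 / 2) * log x

lemma halfShiftedMulLog_half : halfShiftedMulLog (1 / 2) = -log 2 := by
  simp only [halfShiftedMulLog, one_div, log_inv]
  ring

lemma hasDerivAt_halfShiftedMulLog {x : ℝ} (hx : x ≠ 0) :
    HasDerivAt halfShiftedMulLog (log x + 1 + (2 * x)⁻¹) x := by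
  refine (((hasDerivAt_id' x).add_const (1 / 2 : ℝ)).fun_mul (hasDerivAt_log hx)).congr_deriv ?_
  field_simp
  ring

lemma hasDerivAt_log_add_one_add_inv_two_mul {x : ℝ} (hx : x ≠ 0) :
    HasDerivAt (fun x => log x + 1 + (2 * x)⁻¹) ((2 * x - 1) / (2 * x ^ 2)) x := by
  refine (((hasDerivAt_log hx).add_const 1).fun_add
    (((hasDerivAt_id' x).const_mul 2).fun_inv (mul_ne_zero two_ne_zero hx))).congr_deriv ?_
  field_simp
  ring

lemma HasDerivAt.add_comp_one_sub {g : ℝ → ℝ} {a b p : ℝ} (ha : HasDerivAt g a p)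
    (hb : HasDerivAt g b (1 - p)) : HasDerivAt (fun x => g x + g (1 - x)) (a - b) p :=
  ha.fun_add (hb.comp_const_sub 1 p)

lemma HasDerivAt.sub_comp_one_sub {g : ℝ → ℝ} {a b p : ℝ} (ha : HasDerivAt g a p)
    (hb : HasDerivAt g b (1 - p)) : HasDerivAt (fun x => g x - g (1 - x)) (a + b) p := by
  simpa using ha.fun_sub (hb.comp_const_sub 1 p)

theorem concaveOn_halfShiftedMulLog_add_one_sub :
    ConcaveOn ℝ (Ioo 0 1) (fun p => halfShiftedMulLog p + halfShiftedMulLog (1 - p)) := by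
  have ne_zero : ∀ p ∈ Ioo (0 : ℝ) 1, p ≠ 0 ∧ 1 - p ≠ 0 :=
    fun p hp => ⟨hp.1.ne', (sub_pos.2 hp.2).ne'⟩
  have hasDeriv : ∀ p ∈ Ioo (0 : ℝ) 1, HasDerivAt
      (fun p => halfShiftedMulLog p + halfShiftedMulLog (1 - p))
      (log p + 1 + (2 * p)⁻¹ - (log (1 - p) + 1 + (2 * (1 - p))⁻¹)) p := fun p hp =>
    (hasDerivAt_halfShiftedMulLog (ne_zero p hp).1).add_comp_one_sub
      (hasDerivAt_halfShiftedMulLog (ne_zero p hp).2)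
  have second_deriv_nonpos : ∀ p ∈ Ioo (0 : ℝ) 1,
      (2 * p - 1) / (2 * p ^ 2) + (2 * (1 - p) - 1) / (2 * (1 - p) ^ 2) ≤ 0 := by
    intro p hp
    obtain ⟨hp₀, hp₁⟩ := ne_zero p hp
    have sum_eq : (2 * p - 1) / (2 * p ^ 2) + (2 * (1 - p) - 1) / (2 * (1 - p) ^ 2)
        = -((2 * p - 1) ^ 2 / (2 * p ^ 2 * (1 - p) ^ 2)) := by
      field_simp
      ring
    rw [sum_eq, neg_nonpos]
    positivity
  refine concaveOn_of_hasDerivWithinAt2_nonpos (convex_Ioo 0 1)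
    (f' := fun p => log p + 1 + (2 * p)⁻¹ - (log (1 - p) + 1 + (2 * (1 - p))⁻¹))
    (f'' := fun p => (2 * p - 1) / (2 * p ^ 2) + (2 * (1 - p) - 1) / (2 * (1 - p) ^ 2))
    (fun p hp => (hasDeriv p hp).continuousAt.continuousWithinAt) ?_ ?_ ?_
  all_goals simp only [interior_Ioo]
  · exact fun p hp => (hasDeriv p hp).hasDerivWithinAt
  · exact fun p hp => ((hasDerivAt_log_add_one_add_inv_two_mul (ne_zero p hp).1).sub_comp_one_sub
      (hasDerivAt_log_add_one_add_inv_two_mul (ne_zero p hp).2)).hasDerivWithinAt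
  · exact second_deriv_nonpos

theorem halfShiftedMulLog_add_one_sub_le {p : ℝ} (hp : p ∈ Ioo 0 1) :
    halfShiftedMulLog p + halfShiftedMulLog (1 - p) ≤
      halfShiftedMulLog (1 / 2) + halfShiftedMulLog (1 / 2) := by
  have hp' : 1 - p ∈ Ioo (0 : ℝ) 1 := ⟨sub_pos.2 hp.2, sub_lt_self 1 hp.1⟩
  have := concaveOn_halfShiftedMulLog_add_one_sub.ge_on_segment' hp hp'
    (a := 1 / 2) (b := 1 / 2) (by norm_num) (by norm_num) (by norm_num)
  have midpoint : (1 / 2 : ℝ) • p + (1 / 2 : ℝ) • (1 - p) = 1 / 2 := by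
    simp only [smul_eq_mul]
    ring
  rwa [midpoint, sub_sub_cancel, add_comm (halfShiftedMulLog (1 - p)), min_self,
    show (1 : ℝ) - 1 / 2 = 1 / 2 by norm_num] at this

/-- The function `f(p) = (1/2 + p) log p + (3/2 − p) log(1 − p)` is concave on
`(0,1)` and attains its maximum value `−2 log 2` at `p = 1/2`. -/
theorem concave_and_max_of_aux_entropy_function :
    ConcaveOn ℝ (Set.Ioo (0 : ℝ) 1)
      (fun p => (1 / 2 + p) * Real.log p + (3 / 2 - p) * Real.log (1 - p)) ∧
    ((1 / 2 + (1 / 2 : ℝ)) * Real.log (1 / 2) + (3 / 2 - (1 / 2 : ℝ)) * Real.log (1 - 1 / 2)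
        = -2 * Real.log 2) ∧
    (∀ p ∈ Set.Ioo (0 : ℝ) 1,
      (1 / 2 + p) * Real.log p + (3 / 2 - p) * Real.log (1 - p) ≤ -2 * Real.log 2) := by
  have eq_sum (p : ℝ) : (1 / 2 + p) * log p + (3 / 2 - p) * log (1 - p)
      = halfShiftedMulLog p + halfShiftedMulLog (1 - p) := by
    unfold halfShiftedMulLog
    ring
  have value_half : halfShiftedMulLog (1 / 2) + halfShiftedMulLog (1 / 2) = -2 * log 2 := by
    rw [halfShiftedMulLog_half]
    ring
  refine ⟨?_, ?_, fun p hp => ?_⟩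
  · simpa only [eq_sum] using concaveOn_halfShiftedMulLog_add_one_sub
  · rw [eq_sum, ← value_half]
    norm_num
  · rw [eq_sum, ← value_half]
    exact halfShiftedMulLog_add_one_sub_le hp
end
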